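/- Let A be an n×n subring matrix with diagonal (p^{e_1},...,p^{e_{n-1}},1) and I = {i : e_i ≠ 0} of size k. Then the rank of the cokernel Z^n/col(A) equals exactly k; i.e., the corank of the subring col(A) equals the number of diagonal entries that are nontrivial powers of p. -/

import Mathlib

def colSpan {n : ℕ} (A : Matrix (Fin n) (Fin n) ℤ) : AddSubgroup (Fin n → ℤ) :=
  AddSubgroup.closure (Set.range fun j => fun i => A i j)

def IsSubringOf {n : ℕ} (R : AddSubgroup (Fin n → ℤ)) : Prop :=
  (fun _ => (1 : ℤ)) ∈ R ∧ ∀ u v : Fin n → ℤ, u ∈ R → v ∈ R → u * v ∈ R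

def IsHNF {n : ℕ} (A : Matrix (Fin n) (Fin n) ℤ) : Prop :=
  (∀ i j : Fin n, (j : ℕ) < (i : ℕ) → A i j = 0) ∧
  (∀ i j : Fin n, (i : ℕ) < (j : ℕ) → 0 ≤ A i j ∧ A i j < A i i)

def IsSubringMatrix {n : ℕ} (A : Matrix (Fin n) (Fin n) ℤ) : Prop :=
  IsHNF A ∧ A.det ≠ 0 ∧ IsSubringOf (colSpan A)

def GenLE {n : ℕ} (R : AddSubgroup (Fin n → ℤ)) (k : ℕ) : Prop :=
  ∃ S : Finset ((Fin n → ℤ) ⧸ R), S.card ≤ k ∧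
    AddSubgroup.closure (S : Set ((Fin n → ℤ) ⧸ R)) = ⊤

def RankGe {n : ℕ} (R : AddSubgroup (Fin n → ℤ)) (k : ℕ) : Prop :=
  ∀ S : Finset ((Fin n → ℤ) ⧸ R),
    AddSubgroup.closure (S : Set ((Fin n → ℤ) ⧸ R)) = ⊤ → k ≤ S.card

def RankEq {n : ℕ} (R : AddSubgroup (Fin n → ℤ)) (k : ℕ) : Prop :=
  GenLE R k ∧ RankGe R k

/-! Since `det A = p ^ E`, the column span `R` contains `p ^ E • ℤⁿ`, and by Euler's theorem a
suitable power of any `x ∈ R` is congruent mod `p ^ E` to the 0/1 vector marking the coordinates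
where `p ∤ x`; so that vector lies in `R`. Writing a nonzero 0/1 vector as `A *ᵥ y` and looking
at the last nonzero coordinate of `y` shows it equals `1` at an index `j` with `A j j` a unit.
Hence the reduction of `R` mod `p` embeds into the coordinates with unit diagonal entry, and
`ℤⁿ ⧸ R` surjects onto an `𝔽_p`-space whose dimension is at least the number of non-unit
diagonal entries. Conversely, a column with unit diagonal entry expresses `Pi.single c 1`
through earlier basis vectors modulo `R`, so the basis vectors at non-unit diagonal entries
generate `ℤⁿ ⧸ R`. -/

open Matrix

theorem prime_pow_dvd_pow_mul_totient_sub_ite {p : ℕ} (hp : p.Prime) (E : ℕ) (a : ℤ) :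
    (p : ℤ) ^ E ∣ a ^ (E * (p ^ E).totient) - if (p : ℤ) ∣ a then 0 else 1 := by
  have htot : (p ^ E).totient ≠ 0 := (Nat.totient_pos.2 (pow_pos hp.pos E)).ne'
  split_ifs with hpa
  · rw [sub_zero, pow_mul]
    exact (pow_dvd_pow_of_dvd hpa E).trans (dvd_pow_self _ htot)
  · obtain ⟨u, v, huv⟩ : IsCoprime a ((p : ℤ) ^ E) :=
      ((Nat.prime_iff_prime_int.1 hp).coprime_iff_not_dvd.2 hpa).symm.pow_right
    have hunit : IsUnit (a : ZMod (p ^ E)) := by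
      refine IsUnit.of_mul_eq_one (u : ZMod (p ^ E)) ?_
      have hpE : (p : ZMod (p ^ E)) ^ E = 0 := by exact_mod_cast ZMod.natCast_self (p ^ E)
      simpa [mul_comm, hpE] using congrArg (fun z : ℤ => (z : ZMod (p ^ E))) huv
    have h := congrArg Units.val (ZMod.pow_totient hunit.unit)
    rw [Units.val_pow_eq_pow_val, IsUnit.unit_spec, Units.val_one] at h
    have : ((a ^ (E * (p ^ E).totient) : ℤ) : ZMod (p ^ E)) = ((1 : ℤ) : ZMod (p ^ E)) := by
      push_cast; rw [pow_mul', h, one_pow]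
    rw [ZMod.intCast_eq_intCast_iff_dvd_sub] at this
    exact_mod_cast dvd_sub_comm.1 this

theorem Subring.ite_dvd_mem_of_pow_smul_mem {ι : Type*} (S : Subring (ι → ℤ)) {p E : ℕ}
    (hp : p.Prime) (hS : ∀ v, (p : ℤ) ^ E • v ∈ S) {x : ι → ℤ} (hx : x ∈ S) :
    (fun c => if (p : ℤ) ∣ x c then 0 else 1) ∈ S := by
  choose t ht using fun c => prime_pow_dvd_pow_mul_totient_sub_ite hp E (x c)
  have hsub : (fun c => if (p : ℤ) ∣ x c then 0 else 1) =
      x ^ (E * (p ^ E).totient) - (p : ℤ) ^ E • t := by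
    funext c
    simp only [Pi.sub_apply, Pi.pow_apply, Pi.smul_apply, smul_eq_mul, ← ht]
    ring
  rw [hsub]
  exact sub_mem (pow_mem hx _) (hS t)

theorem Matrix.IsUpperTriangular.exists_mulVec_apply_eq_diag_mul {ι R : Type*} [Fintype ι]
    [LinearOrder ι] [NonUnitalNonAssocSemiring R] {A : Matrix ι ι R} (hA : A.IsUpperTriangular)
    {y : ι → R} (hy : y ≠ 0) : ∃ j, y j ≠ 0 ∧ (A *ᵥ y) j = A j j * y j := by
  classical
  have hsupp : (Finset.univ.filter fun j => y j ≠ 0).Nonempty := by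
    obtain ⟨j, hj⟩ := Function.ne_iff.1 hy
    exact ⟨j, by simpa using hj⟩
  set j := (Finset.univ.filter fun j => y j ≠ 0).max' hsupp
  have hj : y j ≠ 0 := (Finset.mem_filter.1 (Finset.max'_mem _ hsupp)).2
  refine ⟨j, hj, Finset.sum_eq_single j (fun l _ hlj => ?_) (by simp)⟩
  rcases hlj.lt_or_gt with hl | hl
  · exact mul_eq_zero_of_left (hA hl) _
  · have : y l = 0 := by
      by_contra hyl
      exact (Finset.le_max' _ l (by simpa using hyl)).not_gt hl
    exact mul_eq_zero_of_right _ this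

theorem rankGe_finrank_of_surjective {n : ℕ} {R : AddSubgroup (Fin n → ℤ)} {K V : Type*}
    [DivisionRing K] [AddCommGroup V] [Module K V] (f : (Fin n → ℤ) ⧸ R →+ V)
    (hf : Function.Surjective f) : RankGe R (Module.finrank K V) := by
  intro S hS
  have hspan : Submodule.span K (Set.range fun s : S => f s) = ⊤ := by
    refine eq_top_iff.2 fun v _ => ?_
    have hv : v ∈ AddSubgroup.closure (f '' S) := by
      rw [← AddMonoidHom.map_closure, hS, AddSubgroup.map_top_of_surjective f hf]
      trivial
    rw [show (Set.range fun s : S => f s) = f '' S by ext; simp]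
    exact (AddSubgroup.closure_le (K := (Submodule.span K (f '' S)).toAddSubgroup)).2
      Submodule.subset_span hv
  simpa using finrank_le_of_span_eq_top hspan

section colSpan

variable {n : ℕ} {A : Matrix (Fin n) (Fin n) ℤ}

theorem colSpan_eq_range_mulVecLin (A : Matrix (Fin n) (Fin n) ℤ) :
    colSpan A = (LinearMap.range A.mulVecLin).toAddSubgroup := by
  rw [Matrix.range_mulVecLin, Submodule.span_int_eq_addSubgroupClosure]
  rfl

theorem mem_colSpan_iff {x : Fin n → ℤ} : x ∈ colSpan A ↔ ∃ y, A *ᵥ y = x := by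
  rw [colSpan_eq_range_mulVecLin]
  rfl

theorem det_smul_mem_colSpan (x : Fin n → ℤ) : A.det • x ∈ colSpan A :=
  mem_colSpan_iff.2 ⟨A.adjugate *ᵥ x, by
    rw [mulVec_mulVec, mul_adjugate, smul_mulVec, one_mulVec]⟩

theorem col_mem_colSpan (c : Fin n) : A.col c ∈ colSpan A :=
  AddSubgroup.subset_closure ⟨c, rfl⟩

def IsSubringOf.toSubring {R : AddSubgroup (Fin n → ℤ)} (h : IsSubringOf R) :
    Subring (Fin n → ℤ) :=
  { R with one_mem' := h.1, mul_mem' := h.2 _ _ }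

theorem exists_isUnit_diag_of_mem_colSpan (hA : A.IsUpperTriangular) (hdet : A.det ≠ 0)
    {ε : Fin n → ℤ} (hε : ε ∈ colSpan A) (h01 : ∀ c, ε c = 0 ∨ ε c = 1) (hne : ε ≠ 0) :
    ∃ j, IsUnit (A j j) ∧ ε j = 1 := by
  obtain ⟨y, rfl⟩ := mem_colSpan_iff.1 hε
  obtain ⟨j, hyj, hj⟩ := hA.exists_mulVec_apply_eq_diag_mul (y := y) (by rintro rfl; simp at hne)
  have hAj : A j j ≠ 0 := by
    rw [det_of_isUpperTriangular hA, Finset.prod_ne_zero_iff] at hdet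
    exact hdet j (Finset.mem_univ j)
  have hεj : (A *ᵥ y) j = 1 := (h01 j).resolve_left (hj ▸ mul_ne_zero hAj hyj)
  exact ⟨j, IsUnit.of_mul_eq_one _ (hj ▸ hεj), hεj⟩

theorem dvd_of_mem_colSpan {p E : ℕ} (hp : p.Prime) (hA : A.IsUpperTriangular)
    (hdet : A.det = (p : ℤ) ^ E) (hring : IsSubringOf (colSpan A)) {x : Fin n → ℤ}
    (hx : x ∈ colSpan A) (hxU : ∀ j, IsUnit (A j j) → (p : ℤ) ∣ x j) (c : Fin n) :
    (p : ℤ) ∣ x c := by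
  set ε : Fin n → ℤ := fun c => if (p : ℤ) ∣ x c then 0 else 1
  have hε : ε ∈ colSpan A := hring.toSubring.ite_dvd_mem_of_pow_smul_mem hp
    (fun v => hdet ▸ det_smul_mem_colSpan v) hx
  by_contra hc
  have hdet0 : A.det ≠ 0 := hdet ▸ pow_ne_zero E (by exact_mod_cast hp.ne_zero)
  obtain ⟨j, hj, hεj⟩ := exists_isUnit_diag_of_mem_colSpan hA hdet0 hε
    (fun c => by by_cases h : (p : ℤ) ∣ x c <;> simp [ε, h])
    (fun h => by simpa [ε, hc] using congrFun h c)
  simp [ε, hxU j hj] at hεj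

def nonunitDiag (A : Matrix (Fin n) (Fin n) ℤ) : Finset (Fin n) :=
  {c | ¬IsUnit (A c c)}

def colSpanMod (A : Matrix (Fin n) (Fin n) ℤ) (p : ℕ) : Submodule (ZMod p) (Fin n → ZMod p) :=
  AddSubgroup.toZModSubmodule p ((colSpan A).map ((Int.castAddHom (ZMod p)).compLeft (Fin n)))

theorem finrank_colSpanMod_add_card_nonunitDiag_le {p E : ℕ} [Fact p.Prime]
    (hA : A.IsUpperTriangular) (hdet : A.det = (p : ℤ) ^ E) (hring : IsSubringOf (colSpan A)) :
    Module.finrank (ZMod p) (colSpanMod A p) + (nonunitDiag A).card ≤ n := by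
  let r := (LinearMap.funLeft (ZMod p) (ZMod p)
    (Subtype.val : {j // IsUnit (A j j)} → Fin n)).comp (colSpanMod A p).subtype
  have hr : Function.Injective r := by
    rw [← LinearMap.ker_eq_bot, LinearMap.ker_eq_bot']
    rintro ⟨v, hv⟩ hrv
    obtain ⟨x, hx, rfl⟩ := (AddSubgroup.mem_toZModSubmodule p).1 hv
    have hdvd := dvd_of_mem_colSpan Fact.out hA hdet hring hx fun j hj => by
      simpa [r, ZMod.intCast_zmod_eq_zero_iff_dvd] using congrFun hrv ⟨j, hj⟩
    ext c
    simpa [ZMod.intCast_zmod_eq_zero_iff_dvd] using hdvd c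
  have hunit : Fintype.card {j // IsUnit (A j j)} + (nonunitDiag A).card = n := by
    rw [Fintype.card_subtype, nonunitDiag, Finset.card_filter_add_card_filter_not,
      Finset.card_univ, Fintype.card_fin]
  have := LinearMap.finrank_le_finrank_of_injective hr
  rw [Module.finrank_pi] at this
  omega

theorem rankGe_card_nonunitDiag {p E : ℕ} (hp : p.Prime) (hA : A.IsUpperTriangular)
    (hdet : A.det = (p : ℤ) ^ E) (hring : IsSubringOf (colSpan A)) :
    RankGe (colSpan A) (nonunitDiag A).card := by
  have : Fact p.Prime := ⟨hp⟩
  let π := (Int.castAddHom (ZMod p)).compLeft (Fin n)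
  let f := QuotientAddGroup.lift (colSpan A) ((colSpanMod A p).mkQ.toAddMonoidHom.comp π)
    fun x hx => (Submodule.Quotient.mk_eq_zero _).2
      ((AddSubgroup.mem_toZModSubmodule p).2 ⟨x, hx, rfl⟩)
  have hf : Function.Surjective f := QuotientAddGroup.lift_surjective_of_surjective _ _
    ((colSpanMod A p).mkQ_surjective.comp ZMod.intCast_surjective.comp_left) _
  have hdim := Submodule.finrank_quotient_add_finrank (colSpanMod A p)
  rw [Module.finrank_fin_fun] at hdim
  have := finrank_colSpanMod_add_card_nonunitDiag_le hA hdet hring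
  exact fun S hS => (by omega : (nonunitDiag A).card ≤ Module.finrank (ZMod p) _).trans
    (rankGe_finrank_of_surjective f hf S hS)

theorem genLE_card_nonunitDiag (hA : A.IsUpperTriangular) :
    GenLE (colSpan A) (nonunitDiag A).card := by
  classical
  let mk := QuotientAddGroup.mk' (colSpan A)
  let g : Fin n → (Fin n → ℤ) ⧸ colSpan A := fun c => mk (Pi.single c 1)
  have hmk : ∀ x, mk x = ∑ j, x j • g j := fun x => by
    conv_lhs => rw [pi_eq_sum_univ' x]
    simp only [map_sum, map_zsmul, g]
  let H := AddSubgroup.closure (((nonunitDiag A).image g : Finset ((Fin n → ℤ) ⧸ colSpan A)) :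
    Set ((Fin n → ℤ) ⧸ colSpan A))
  have hg : ∀ c, g c ∈ H := by
    intro c
    induction c using WellFoundedLT.induction with
    | _ c ih =>
    by_cases hc : c ∈ nonunitDiag A
    · exact AddSubgroup.subset_closure (Finset.mem_coe.2 (Finset.mem_image_of_mem g hc))
    obtain ⟨u, hu⟩ : IsUnit (A c c) := by simpa [nonunitDiag] using hc
    have hcol : ∑ j, A j c • g j = 0 := by
      rw [← hmk]
      exact (QuotientAddGroup.eq_zero_iff _).2 (col_mem_colSpan c)
    rw [← Finset.add_sum_erase _ _ (Finset.mem_univ c)] at hcol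
    have hc_mem : A c c • g c ∈ H := by
      rw [eq_neg_of_add_eq_zero_left hcol]
      refine H.neg_mem (H.sum_mem fun j hj => ?_)
      rcases (Finset.ne_of_mem_erase hj).lt_or_gt with hjc | hjc
      · exact H.zsmul_mem (ih j hjc) _
      · rw [hA hjc, zero_smul]
        exact H.zero_mem
    have := H.zsmul_mem hc_mem ↑u⁻¹
    rwa [smul_smul, ← hu, Units.inv_mul, one_smul] at this
  refine ⟨(nonunitDiag A).image g, Finset.card_image_le, eq_top_iff.2 fun y _ => ?_⟩
  obtain ⟨x, rfl⟩ := QuotientAddGroup.mk'_surjective _ y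
  rw [hmk]
  exact H.sum_mem fun j _ => H.zsmul_mem (hg j) _

end colSpan

theorem corank_eq_num_nontrivial_diag (n k p : ℕ) (hp : p.Prime)
    (A : Matrix (Fin (n + 1)) (Fin (n + 1)) ℤ) (hA : IsSubringMatrix A)
    (e : Fin n → ℕ)
    (hdiag : ∀ i : Fin n, A i.castSucc i.castSucc = (p : ℤ) ^ e i)
    (hlast : A (Fin.last n) (Fin.last n) = 1)
    (hcard : (Finset.univ.filter (fun i : Fin n => e i ≠ 0)).card = k) :
    RankEq (colSpan A) k := by
  have hupper : A.IsUpperTriangular := fun i j h => hA.1.1 i j h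
  have hdet : A.det = (p : ℤ) ^ ∑ i, e i := by
    rw [det_of_isUpperTriangular hupper, Fin.prod_univ_castSucc, hlast, mul_one,
      ← Finset.prod_pow_eq_pow_sum]
    exact Finset.prod_congr rfl fun i _ => hdiag i
  have hp_unit : ¬IsUnit (p : ℤ) := (Nat.prime_iff_prime_int.1 hp).not_isUnit
  have hD : nonunitDiag A = (Finset.univ.filter fun i : Fin n => e i ≠ 0).map Fin.castSuccEmb := by
    ext c
    cases c using Fin.lastCases <;>
      simp [nonunitDiag, hdiag, hlast, isUnit_pow_iff_of_not_isUnit hp_unit]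
  rw [← hcard, ← Finset.card_map Fin.castSuccEmb, ← hD]
  exact ⟨genLE_card_nonunitDiag hupper, rankGe_card_nonunitDiag hp hupper hdet hA.2.2⟩
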